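/- If an EG program Γ is tight (its predicate dependency graph G_Γ is acyclic), then the infinitary program τ₁Γ is tight on every interpretation. -/

import Mathlib

namespace EG


/-! ### Relation symbols -/

inductive Rel : Type where
  | req | rne | rlt | rle | rgt | rge

/-- Evaluation of a relation symbol relative to a strict total order `lt`
on the domain (equality is genuine equality of domain elements). -/
def Rel.eval {α : Type} (lt : α → α → Prop) : Rel → α → α → Prop
  | .req, a, b => a = b
  | .rne, a, b => a ≠ b
  | .rlt, a, b => lt a b
  | .rle, a, b => lt a b ∨ a = b
  | .rgt, a, b => lt b a
  | .rge, a, b => lt b a ∨ a = b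

/-! ### Precomputed terms -/

/-- Precomputed terms over a type `C` of symbolic constants:
numerals, symbolic constants, `inf`, `sup`, and applications of a symbolic
constant to a tuple of precomputed terms. -/
inductive Pre (C : Type) : Type where
  | inf
  | sup
  | num (n : ℤ)
  | sym (c : C)
  | app (f : C) (args : List (Pre C))

/-- The assumed total order on precomputed terms: a strict total order with
`inf` least, `sup` greatest, in which numerals are ordered as the integers. -/
structure PreOrderOK {C : Type} (lt : Pre C → Pre C → Prop) : Prop where
  irrefl : ∀ a, ¬ lt a a
  trans : ∀ a b c, lt a b → lt b c → lt a c
  total : ∀ a b, lt a b ∨ a = b ∨ lt b a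
  inf_least : ∀ a, a ≠ Pre.inf → lt Pre.inf a
  sup_greatest : ∀ a, a ≠ Pre.sup → lt a Pre.sup
  num_iff : ∀ m n : ℤ, (lt (Pre.num m) (Pre.num n) ↔ m < n)

/-- Atoms `p(r)` where `r` is a tuple of precomputed terms. -/
abbrev EGAtom (C : Type) := C × List (Pre C)

/-- An interpretation is a set of atoms over precomputed terms. -/
abbrev Interp (C : Type) := Set (EGAtom C)

/-- Valuations: variables (natural numbers) ↦ precomputed terms. -/
abbrev Val (C : Type) := ℕ → Pre C

/-- Simultaneously update a valuation on a list of variables by a list of values. -/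
def updList {C : Type} : Val C → List ℕ → List (Pre C) → Val C
  | v, [], _ => v
  | v, _ :: _, [] => v
  | v, x :: xs, r :: rs => Function.update (updList v xs rs) x r

/-! ### Terms -/

/-- Terms over symbolic constants `C` and operation names `O`. -/
inductive Term (C O : Type) : Type where
  | num (n : ℤ)
  | sym (c : C)
  | var (x : ℕ)
  | inf
  | sup
  | app (f : C) (ts : List (Term C O))
  | op (o : O) (ts : List (Term C O))
  | interval (t₁ t₂ : Term C O)

mutual
/-- The list of variables occurring in a term. -/
def Term.varList {C O : Type} : Term C O → List ℕ
  | .num _ => []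
  | .sym _ => []
  | .var x => [x]
  | .inf => []
  | .sup => []
  | .app _ ts => Term.varListL ts
  | .op _ ts => Term.varListL ts
  | .interval t₁ t₂ => t₁.varList ++ t₂.varList

def Term.varListL {C O : Type} : List (Term C O) → List ℕ
  | [] => []
  | t :: ts => t.varList ++ Term.varListL ts
end

/-- A term (or tuple of terms, etc.) is ground if it contains no variables. -/
def Term.Ground {C O : Type} (t : Term C O) : Prop := t.varList = []

mutual
/-- The set of values of a term under a valuation `v` (for a ground term this
is the set `[t]` of its values, independent of `v`). `opFun` gives the partial
integer function denoted by each operation name. -/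
def Term.val {C O : Type} (opFun : O → List ℤ → Option ℤ) (v : Val C) :
    Term C O → Set (Pre C)
  | .num n => {Pre.num n}
  | .sym c => {Pre.sym c}
  | .var x => {v x}
  | .inf => {Pre.inf}
  | .sup => {Pre.sup}
  | .app f ts => {r | ∃ rs : List (Pre C), Term.vals opFun v ts rs ∧ r = Pre.app f rs}
  | .op o ts => {r | ∃ ks : List ℤ, Term.vals opFun v ts (ks.map Pre.num) ∧
      ∃ m : ℤ, opFun o ks = some m ∧ r = Pre.num m}
  | .interval t₁ t₂ => {r | ∃ k₁ k₂ m : ℤ, Pre.num k₁ ∈ Term.val opFun v t₁ ∧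
      Pre.num k₂ ∈ Term.val opFun v t₂ ∧ k₁ ≤ m ∧ m ≤ k₂ ∧ r = Pre.num m}

/-- `Term.vals opFun v ts rs` : the tuple `rs` of precomputed terms is a tuple of
values of the tuple `ts` of terms (componentwise). -/
def Term.vals {C O : Type} (opFun : O → List ℤ → Option ℤ) (v : Val C) :
    List (Term C O) → List (Pre C) → Prop
  | [], rs => rs = []
  | t :: ts, rs => ∃ r rs', rs = r :: rs' ∧ r ∈ Term.val opFun v t ∧ Term.vals opFun v ts rs'
end

mutual
/-- Embedding of precomputed terms into terms. -/
def Pre.toTerm {C O : Type} : Pre C → Term C O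
  | .inf => .inf
  | .sup => .sup
  | .num n => .num n
  | .sym c => .sym c
  | .app f rs => .app f (Pre.toTermL rs)

def Pre.toTermL {C O : Type} : List (Pre C) → List (Term C O)
  | [] => []
  | r :: rs => Pre.toTerm r :: Pre.toTermL rs
end


/-! ### Formulas with aggregates -/

mutual
/-- Arguments of the extended (aggregate) language. -/
inductive AArg (C O A : Type) : Type where
  | num (n : ℤ)
  | sym (c : C)
  | var (x : ℕ)
  | inf
  | sup
  | app (f : C) (args : List (AArg C O A))
  | agg (a : A) (xs : List ℕ) (F : AFml C O A)

/-- Formulas of the extended (aggregate) first-order language over the domain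
of precomputed terms. -/
inductive AFml (C O A : Type) : Type where
  | atom (p : C) (args : List (AArg C O A))
  | cmp (rel : Rel) (a₁ a₂ : AArg C O A)
  | mem (a : AArg C O A) (t : Term C O)
  | bot
  | impl (F G : AFml C O A)
  | all (x : ℕ) (F : AFml C O A)
end

section Sem
variable {C O A : Type}
variable (opFun : O → List ℤ → Option ℤ)
variable (aggFun : A → Set (List (Pre C)) → Pre C)
variable (lt : Pre C → Pre C → Prop)

mutual
/-- The precomputed term denoted by an argument (joint recursion with `AFml.sat`). -/
def AArg.eval (I : Interp C) : Val C → AArg C O A → Pre C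
  | _, .num n => Pre.num n
  | _, .sym c => Pre.sym c
  | v, .var x => v x
  | _, .inf => Pre.inf
  | _, .sup => Pre.sup
  | v, .app f args => Pre.app f (AArg.evalL I v args)
  | v, .agg a xs F => aggFun a
      {rs : List (Pre C) | rs.length = xs.length ∧ AFml.sat I (updList v xs rs) F}

def AArg.evalL (I : Interp C) : Val C → List (AArg C O A) → List (Pre C)
  | _, [] => []
  | v, a :: as => AArg.eval I v a :: AArg.evalL I v as

/-- Satisfaction of a formula by an interpretation `I` under a valuation `v`. -/
def AFml.sat (I : Interp C) : Val C → AFml C O A → Prop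
  | v, .atom p args => (p, AArg.evalL I v args) ∈ I
  | v, .cmp rel a₁ a₂ => Rel.eval lt rel (AArg.eval I v a₁) (AArg.eval I v a₂)
  | v, .mem a t => AArg.eval I v a ∈ Term.val opFun v t
  | _, .bot => False
  | v, .impl F G => AFml.sat I v F → AFml.sat I v G
  | v, .all x F => ∀ r : Pre C, AFml.sat I (Function.update v x r) F
end

end Sem
/-! ### Infinitary propositional formulas -/

/-- Infinitary propositional formulas over a type `α` of atoms: atoms, `⊥`,
conjunctions and disjunctions of arbitrary families of formulas, implication. -/
inductive IForm (α : Type) : Type 1 where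
  | atom (a : α)
  | bot
  | conj (ι : Type) (f : ι → IForm α)
  | disj (ι : Type) (f : ι → IForm α)
  | impl (F G : IForm α)

namespace IForm

variable {α : Type}

/-- `⊤` as the empty conjunction. -/
def top : IForm α := conj Empty (fun e => e.elim)
def neg (F : IForm α) : IForm α := impl F bot
def and (F G : IForm α) : IForm α := conj Bool (fun b => cond b F G)
def or (F G : IForm α) : IForm α := disj Bool (fun b => cond b F G)
def conjList (l : List (IForm α)) : IForm α := conj (Fin l.length) (fun i => l.get i)

/-- Classical satisfaction of infinitary formulas. -/
def sat (I : Set α) : IForm α → Prop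
  | atom a => a ∈ I
  | bot => False
  | conj _ f => ∀ i, sat I (f i)
  | disj _ f => ∃ i, sat I (f i)
  | impl F G => sat I F → sat I G

open Classical in
/-- The Ferraris reduct of an infinitary formula relative to an interpretation:
every (maximal) subformula not satisfied by `I` is replaced by `⊥`. -/
noncomputable def reduct (I : Set α) : IForm α → IForm α
  | atom a => if a ∈ I then atom a else bot
  | bot => bot
  | conj ι f => conj ι (fun i => reduct I (f i))
  | disj ι f => disj ι (fun i => reduct I (f i))
  | impl F G => if sat I (impl F G) then impl (reduct I F) (reduct I G) else bot

/-- `I` is a stable model of `F` (Ferraris semantics for infinitary formulas):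
`I` is a minimal model of the reduct `F^I`. -/
def stable (I : Set α) (F : IForm α) : Prop :=
  sat I (reduct I F) ∧ ∀ J : Set α, J ⊆ I → sat J (reduct I F) → J = I

/-- Satisfaction in the infinitary logic of here-and-there `HT^∞`, for an
HT-interpretation given by `J ⊆ I` ("here" `J`, "there" `I`). -/
def satHT (J I : Set α) : IForm α → Prop
  | atom a => a ∈ J
  | bot => False
  | conj _ f => ∀ i, satHT J I (f i)
  | disj _ f => ∃ i, satHT J I (f i)
  | impl F G => (satHT J I F → satHT J I G) ∧ (sat I F → sat I G)

/-- Strong equivalence of infinitary formulas, i.e. equivalence in `HT^∞`. -/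
def HTEquiv (F G : IForm α) : Prop :=
  ∀ J I : Set α, J ⊆ I → (satHT J I F ↔ satHT J I G) ∧ (sat I F ↔ sat I G)

mutual
/-- Positive nonnegated atoms of an infinitary formula. -/
def Pnn : IForm α → Set α
  | atom a => {a}
  | bot => ∅
  | conj _ f => ⋃ i, Pnn (f i)
  | disj _ f => ⋃ i, Pnn (f i)
  | impl _ bot => ∅
  | impl G H => Nnn G ∪ Pnn H

/-- Negative nonnegated atoms of an infinitary formula. -/
def Nnn : IForm α → Set α
  | atom _ => ∅
  | bot => ∅
  | conj _ f => ⋃ i, Nnn (f i)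
  | disj _ f => ⋃ i, Nnn (f i)
  | impl _ bot => ∅
  | impl G H => Pnn G ∪ Nnn H
end

end IForm

/-! ### Infinitary programs -/

/-- An infinitary rule `F → A`. -/
structure IRule (α : Type) : Type 1 where
  body : IForm α
  head : α

/-- An infinitary program: a conjunction (represented as a set) of infinitary rules. -/
abbrev IProg (α : Type) := Set (IRule α)

def IRule.toForm {α : Type} (r : IRule α) : IForm α := .impl r.body (.atom r.head)

namespace IProg
variable {α : Type}

/-- `I` satisfies the program (i.e., the conjunction of its rules). -/
def sat (I : Set α) (P : IProg α) : Prop := ∀ r ∈ P, IForm.sat I r.toForm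

/-- `I` is a stable model of the program, i.e., of the conjunction of its rules:
`I` is a minimal model of the reduct of that conjunction. -/
def stable (I : Set α) (P : IProg α) : Prop :=
  (∀ r ∈ P, IForm.sat I (IForm.reduct I r.toForm)) ∧
  ∀ J : Set α, J ⊆ I → (∀ r ∈ P, IForm.sat J (IForm.reduct I r.toForm)) → J = I

/-- `I` is supported by the program. -/
def supported (I : Set α) (P : IProg α) : Prop :=
  ∀ a ∈ I, ∃ r ∈ P, r.head = a ∧ IForm.sat I r.body

/-- `I` satisfies the completion of `P`, with signature (set of atoms) `S`:
the conjunction over all atoms `A ∈ S` of `A ↔ ⋁ (P|_A)`. -/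
def satCompletionOn (S : Set α) (I : Set α) (P : IProg α) : Prop :=
  ∀ a ∈ S, (a ∈ I ↔ ∃ r ∈ P, r.head = a ∧ IForm.sat I r.body)

/-- `B` is a parent of `A` relative to `P` and `I`. -/
def parent (P : IProg α) (I : Set α) (B A : α) : Prop :=
  A ∈ I ∧ B ∈ I ∧ ∃ r ∈ P, r.head = A ∧ IForm.sat I r.body ∧ B ∈ IForm.Pnn r.body

/-- `P` is tight on `I`: there is no infinite sequence of elements of `I` in
which each element is followed by one of its parents. -/
def tightOn (P : IProg α) (I : Set α) : Prop :=
  ¬ ∃ f : ℕ → α, (∀ i, f i ∈ I) ∧ ∀ i, parent P I (f (i + 1)) (f i)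

end IProg
/-! ### Programs -/

/-- A literal: an atom `p(t₁,…,tₙ)` (`pos = true`) or such an atom preceded
by `not` (`pos = false`). -/
structure Lit (C O : Type) : Type where
  pos : Bool
  pred : C
  args : List (Term C O)

/-- A comparison `t₁ ≺ t₂`. -/
structure Comp (C O : Type) : Type where
  rel : Rel
  lhs : Term C O
  rhs : Term C O

/-- An element of the condition of an aggregate expression: a literal or comparison. -/
abbrev CondElem (C O : Type) := Lit C O ⊕ Comp C O

def Lit.varList {C O : Type} (l : Lit C O) : List ℕ := Term.varListL l.args
def Comp.varList {C O : Type} (c : Comp C O) : List ℕ := c.lhs.varList ++ c.rhs.varList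
def CondElem.varList {C O : Type} : CondElem C O → List ℕ :=
  Sum.elim Lit.varList Comp.varList

/-- An aggregate expression `α{t : C} ≺ s`, where `s` is a variable or a
precomputed term. -/
structure AggExpr (C O A : Type) : Type where
  name : A
  ts : List (Term C O)
  cond : List (CondElem C O)
  rel : Rel
  bound : ℕ ⊕ Pre C

def AggExpr.lhsVarList {C O A : Type} (E : AggExpr C O A) : List ℕ :=
  Term.varListL E.ts ++ E.cond.flatMap CondElem.varList

def boundVarList {C : Type} : ℕ ⊕ Pre C → List ℕ
  | .inl x => [x]
  | .inr _ => []

def AggExpr.varList {C O A : Type} (E : AggExpr C O A) : List ℕ :=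
  E.lhsVarList ++ boundVarList E.bound

/-- An aggregate expression is closed if its bound `s` is ground
(i.e., a precomputed term). -/
def AggExpr.ClosedBound {C O A : Type} (E : AggExpr C O A) : Prop :=
  ∃ r : Pre C, E.bound = Sum.inr r

/-- A conjunctive term of a rule body. -/
inductive BElem (C O A : Type) : Type where
  | lit (l : Lit C O)
  | comp (c : Comp C O)
  | agg (E : AggExpr C O A)

def BElem.varList {C O A : Type} : BElem C O A → List ℕ
  | .lit l => l.varList
  | .comp c => c.varList
  | .agg E => E.varList

/-- A body element suitable for the translation `τ`: a ground literal,
a ground comparison, or a closed aggregate expression. -/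
def BElem.ClosedC {C O A : Type} : BElem C O A → Prop
  | .lit l => l.varList = []
  | .comp c => c.varList = []
  | .agg E => E.ClosedBound

/-- The head of a rule. -/
inductive Head (C O : Type) : Type where
  | basic (p : C) (ts : List (Term C O))
  | choice (p : C) (ts : List (Term C O))
  | empty

def Head.varList {C O : Type} : Head C O → List ℕ
  | .basic _ ts => Term.varListL ts
  | .choice _ ts => Term.varListL ts
  | .empty => []

/-- A rule `Head ← Body`. -/
structure Rule (C O A : Type) : Type where
  head : Head C O
  body : List (BElem C O A)

def Rule.varList {C O A : Type} (R : Rule C O A) : List ℕ :=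
  R.head.varList ++ R.body.flatMap BElem.varList

/-- The variables with an occurrence in the rule outside the left-hand sides
`α{t : C}` of aggregate expressions (head, literal and comparison conjuncts,
and bounds of aggregate expressions); these are the global variables. -/
def Rule.globalList {C O A : Type} (R : Rule C O A) : List ℕ :=
  (R.head.varList ++ R.body.flatMap (fun b =>
    match b with
    | .lit l => l.varList
    | .comp c => c.varList
    | .agg E => boundVarList E.bound)).dedup

/-- The local variables of a rule: those occurring in the rule, all of whose
occurrences are inside left-hand sides of aggregate expressions of its body. -/
def Rule.localList {C O A : Type} (R : Rule C O A) : List ℕ :=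
  ((R.body.flatMap (fun b =>
    match b with
    | .agg E => E.lhsVarList
    | _ => [])).dedup).filter (fun x => x ∉ R.globalList)

/-- A rule is closed if all its variables are local. -/
def Rule.Closed {C O A : Type} (R : Rule C O A) : Prop := R.globalList = []

/-! ### Predicate symbol occurrences, vocabulary, dependency graph -/

def Lit.hasPred {C O : Type} (p : C) (n : ℕ) (l : Lit C O) : Prop :=
  l.pred = p ∧ l.args.length = n

def CondElem.hasPred {C O : Type} (p : C) (n : ℕ) : CondElem C O → Prop
  | .inl l => l.hasPred p n
  | .inr _ => False

def AggExpr.hasPred {C O A : Type} (p : C) (n : ℕ) (E : AggExpr C O A) : Prop :=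
  ∃ ce ∈ E.cond, CondElem.hasPred p n ce

/-- The predicate symbol `p/n` occurs in a body element. -/
def BElem.hasPred {C O A : Type} (p : C) (n : ℕ) : BElem C O A → Prop
  | .lit l => l.hasPred p n
  | .comp _ => False
  | .agg E => E.hasPred p n

/-- The predicate symbol `p/n` occurs in a positive literal or in an aggregate
expression (condition (ii′)). -/
def BElem.hasPosOrAggPred {C O A : Type} (p : C) (n : ℕ) : BElem C O A → Prop
  | .lit l => l.pos = true ∧ l.hasPred p n
  | .comp _ => False
  | .agg E => E.hasPred p n

def Head.hasPred {C O : Type} (p : C) (n : ℕ) : Head C O → Prop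
  | .basic q ts => q = p ∧ ts.length = n
  | .choice q ts => q = p ∧ ts.length = n
  | .empty => False

/-- The predicate symbol `p/n` occurs in the rule `R`. -/
def Rule.hasPredSym {C O A : Type} (p : C) (n : ℕ) (R : Rule C O A) : Prop :=
  R.head.hasPred p n ∨ ∃ e ∈ R.body, BElem.hasPred p n e

/-- The vocabulary of a program: all atoms `p(r)` with `r` a tuple of `n`
precomputed terms and `p/n` occurring in the program. -/
def vocab {C O A : Type} (Γ : Set (Rule C O A)) : Set (EGAtom C) :=
  {a | ∃ R ∈ Γ, Rule.hasPredSym a.1 a.2.length R}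

/-- The edge relation of the dependency graph `G_Γ` on predicate symbols. -/
def DepEdge {C O A : Type} (Γ : Set (Rule C O A)) (q p : C × ℕ) : Prop :=
  ∃ R ∈ Γ, R.head.hasPred q.1 q.2 ∧ ∃ e ∈ R.body, BElem.hasPosOrAggPred p.1 p.2 e

/-- A program is tight if its dependency graph is acyclic. -/
def EGTight {C O A : Type} (Γ : Set (Rule C O A)) : Prop :=
  ∀ s : C × ℕ, ¬ Relation.TransGen (DepEdge Γ) s s


/-! ### Embeddings and aggregate-freeness -/

mutual
/-- Embedding of precomputed terms into arguments of the extended language. -/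
def Pre.toAArg {C O A : Type} : Pre C → AArg C O A
  | .inf => .inf
  | .sup => .sup
  | .num n => .num n
  | .sym c => .sym c
  | .app f rs => .app f (Pre.toAArgL rs)

def Pre.toAArgL {C O A : Type} : List (Pre C) → List (AArg C O A)
  | [] => []
  | r :: rs => Pre.toAArg r :: Pre.toAArgL rs
end

mutual
/-- The number of occurrences of aggregate names in an argument;
an argument is aggregate-free iff this is `0`. -/
def AArg.countAgg {C O A : Type} : AArg C O A → ℕ
  | .num _ => 0
  | .sym _ => 0
  | .var _ => 0
  | .inf => 0
  | .sup => 0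
  | .app _ args => AArg.countAggL args
  | .agg _ _ F => F.countAgg + 1

def AArg.countAggL {C O A : Type} : List (AArg C O A) → ℕ
  | [] => 0
  | a :: as => a.countAgg + AArg.countAggL as

def AFml.countAgg {C O A : Type} : AFml C O A → ℕ
  | .atom _ args => AArg.countAggL args
  | .cmp _ a₁ a₂ => a₁.countAgg + a₂.countAgg
  | .mem a _ => a.countAgg
  | .bot => 0
  | .impl F G => F.countAgg + G.countAgg
  | .all _ F => F.countAgg
end

/-- An argument contains no aggregate names. -/
def AArg.AggFree {C O A : Type} (a : AArg C O A) : Prop := a.countAgg = 0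

mutual
/-- An aggregate-free argument, viewed as a term (the `agg` case is junk and
is never relevant for aggregate-free arguments). -/
def AArg.toTerm {C O A : Type} : AArg C O A → Term C O
  | .num n => .num n
  | .sym c => .sym c
  | .var x => .var x
  | .inf => .inf
  | .sup => .sup
  | .app f args => .app f (AArg.toTermL args)
  | .agg _ _ _ => .inf

def AArg.toTermL {C O A : Type} : List (AArg C O A) → List (Term C O)
  | [] => []
  | a :: as => a.toTerm :: AArg.toTermL as
end

/-! ### Abbreviated connectives of the extended first-order language -/

namespace AFml
variable {C O A : Type}

def negF (F : AFml C O A) : AFml C O A := .impl F .bot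
def topF : AFml C O A := negF .bot
def andF (F G : AFml C O A) : AFml C O A := .impl (.impl F (.impl G .bot)) .bot
def orF (F G : AFml C O A) : AFml C O A := .impl (negF F) G
def iffF (F G : AFml C O A) : AFml C O A := andF (.impl F G) (.impl G F)
def exF (x : ℕ) (F : AFml C O A) : AFml C O A := negF (.all x (negF F))
def andList (l : List (AFml C O A)) : AFml C O A := l.foldr andF topF
def orList (l : List (AFml C O A)) : AFml C O A := l.foldr orF .bot
def exList (xs : List ℕ) (F : AFml C O A) : AFml C O A := xs.foldr exF F
def allList (xs : List ℕ) (F : AFml C O A) : AFml C O A := xs.foldr .all F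

end AFml

/-! ### The translation φ (formula representations) -/

/-- A variable index strictly greater than every element of `l`
(used to pick new/fresh variables). -/
def freshVar (l : List ℕ) : ℕ := l.foldr max 0 + 1

/-- The bound `s` of an aggregate expression, as a term. -/
def boundTerm {C O : Type} : ℕ ⊕ Pre C → Term C O
  | .inl x => .var x
  | .inr r => r.toTerm

section Phi
variable {C O A : Type}

/-- `φ` of a literal: `∃X(X ∈ t ∧ p(X))`, resp. `∃X(X ∈ t ∧ ¬p(X))`,
with `X` a tuple of new variables. -/
def phiLit (l : Lit C O) : AFml C O A :=
  let n := freshVar l.varList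
  let ws := (List.range l.args.length).map (· + n)
  AFml.exList ws (AFml.andF
    (AFml.andList ((ws.zip l.args).map (fun q => AFml.mem (AArg.var q.1) q.2)))
    (if l.pos then AFml.atom l.pred (ws.map AArg.var)
     else AFml.negF (AFml.atom l.pred (ws.map AArg.var))))

/-- `φ` of a comparison: `∃X₁X₂(X₁ ∈ t₁ ∧ X₂ ∈ t₂ ∧ X₁ ≺ X₂)`. -/
def phiComp (c : Comp C O) : AFml C O A :=
  let n := freshVar c.varList
  AFml.exF n (AFml.exF (n + 1) (AFml.andF (AFml.mem (AArg.var n) c.lhs)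
    (AFml.andF (AFml.mem (AArg.var (n + 1)) c.rhs)
      (AFml.cmp c.rel (AArg.var n) (AArg.var (n + 1))))))

def phiCondElem : CondElem C O → AFml C O A :=
  Sum.elim phiLit phiComp

/-- `φ` of a conjunction of literals and comparisons. -/
def phiCond (cond : List (CondElem C O)) : AFml C O A :=
  AFml.andList (cond.map phiCondElem)

/-- `φ^X` of an aggregate expression `α{t : C} ≺ s` (with `X = xs` the
variables treated as local):
`∃Y(α{Z | ∃X(Z ∈ t ∧ φC)} ≺ Y ∧ Y ∈ s)`, with `Z`, `Y` new variables. -/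
def phiAgg (xs : List ℕ) (E : AggExpr C O A) : AFml C O A :=
  let n := freshVar (xs ++ E.varList)
  let zs := (List.range E.ts.length).map (· + (n + 1))
  AFml.exF n (AFml.andF
    (AFml.cmp E.rel
      (AArg.agg E.name zs
        (AFml.exList xs (AFml.andF
          (AFml.andList ((zs.zip E.ts).map (fun q => AFml.mem (AArg.var q.1) q.2)))
          (phiCond E.cond))))
      (AArg.var n))
    (AFml.mem (AArg.var n) (boundTerm E.bound)))

/-- `φ^X` of a body element, where `xs` is the list of variables treated as local. -/
def phiBElem (xs : List ℕ) : BElem C O A → AFml C O A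
  | .lit l => phiLit l
  | .comp c => phiComp c
  | .agg E => phiAgg xs E

/-- `φ^X` of a body (a conjunction of literals, comparisons and aggregate
expressions), where `xs` is the list of variables treated as local. -/
def phiBody (xs : List ℕ) (b : List (BElem C O A)) : AFml C O A :=
  AFml.andList (b.map (phiBElem xs))

/-- The formula representation of a constraint `← Body`: `¬ φ^X(Body)`,
where `X` is the list of local variables of the constraint. -/
def phiConstraintRep (R : Rule C O A) : AFml C O A :=
  AFml.negF (phiBody R.localList R.body)

/-- `V ∈ t` for a tuple `V` of variables and a tuple `t` of terms. -/
def memConj (Vs : List ℕ) (ts : List (Term C O)) : AFml C O A :=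
  AFml.andList ((Vs.zip ts).map (fun q => AFml.mem (AArg.var q.1) q.2))

/-- The antecedent `Fᵢ` of the formula representation `Fᵢ → p(V)` of a basic or
choice rule, where `Vs` is the chosen tuple `V` of new variables:
for a basic rule `V ∈ t ∧ φ^X(Body)`, for a choice rule
`V ∈ t ∧ φ^X(Body) ∧ p(V)`, with `X` the local variables of the rule. -/
def ruleAnte (Vs : List ℕ) (R : Rule C O A) : AFml C O A :=
  match R.head with
  | .basic _ ts => AFml.andF (memConj Vs ts) (phiBody R.localList R.body)
  | .choice p ts => AFml.andF (memConj Vs ts)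
      (AFml.andF (phiBody R.localList R.body) (AFml.atom p (Vs.map AArg.var)))
  | .empty => AFml.bot

/-- Does `R` belong to the definition of `p/n` (a basic or choice rule whose
head is of the form `p(t₁,…,tₙ)` or `{p(t₁,…,tₙ)}`)? -/
def definesB [DecidableEq C] (p : C) (n : ℕ) (R : Rule C O A) : Bool :=
  match R.head with
  | .basic q ts => decide (q = p ∧ ts.length = n)
  | .choice q ts => decide (q = p ∧ ts.length = n)
  | .empty => false

/-- The completed definition of the predicate symbol `p/n` in the finite
program `Γ`: `∀V(p(V) ↔ ⋁ᵢ ∃Uᵢ Fᵢ)`, where the `Fᵢ` come from the formula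
representations of the rules defining `p/n`, `V` is a tuple of new variables
chosen in the same way for all `i`, and `Uᵢ` is the list of free variables of
`Fᵢ` not in `V` (i.e., the global variables of the corresponding rule). -/
def completedDef [DecidableEq C] (Γ : List (Rule C O A)) (p : C) (n : ℕ) : AFml C O A :=
  let base := freshVar (Γ.flatMap Rule.varList)
  let Vs := (List.range n).map (· + base)
  AFml.allList Vs (AFml.iffF (AFml.atom p (Vs.map AArg.var))
    (AFml.orList ((Γ.filter (definesB p n)).map
      (fun R => AFml.exList R.globalList (ruleAnte Vs R)))))

end Phi

/-! ### The translation τ (grounding into infinitary formulas) -/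

section Tau
variable {C O A : Type}
variable (opFun : O → List ℤ → Option ℤ)
variable (aggFun : A → Set (List (Pre C)) → Pre C)
variable (lt : Pre C → Pre C → Prop)

/-- `τ` of a (ground instance of a) literal: `⋁_{r ∈ [t]} p(r)`, resp.
`⋁_{r ∈ [t]} ¬p(r)`; variables are evaluated by the valuation `v`. -/
def tauLit (v : Val C) (l : Lit C O) : IForm (EGAtom C) :=
  if l.pos then
    .disj {rs : List (Pre C) // Term.vals opFun v l.args rs}
      (fun rs => .atom (l.pred, rs.val))
  else
    .disj {rs : List (Pre C) // Term.vals opFun v l.args rs}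
      (fun rs => .neg (.atom (l.pred, rs.val)))

open Classical in
/-- `τ` of a (ground instance of a) comparison: `⊤` if the relation holds
between some values of the two terms, `⊥` otherwise. -/
noncomputable def tauComp (v : Val C) (c : Comp C O) : IForm (EGAtom C) :=
  if ∃ r₁ ∈ Term.val opFun v c.lhs, ∃ r₂ ∈ Term.val opFun v c.rhs,
      Rel.eval lt c.rel r₁ r₂
  then .top else .bot

noncomputable def tauCondElem (v : Val C) : CondElem C O → IForm (EGAtom C)
  | .inl l => tauLit opFun v l
  | .inr c => tauComp opFun lt v c

/-- `τ` of a conjunction of (ground instances of) literals and comparisons. -/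
noncomputable def tauCond (v : Val C) (cond : List (CondElem C O)) : IForm (EGAtom C) :=
  IForm.conjList (cond.map (tauCondElem opFun lt v))

/-- The value of the bound `s` of an aggregate expression under a valuation. -/
def boundVal (v : Val C) : ℕ ⊕ Pre C → Pre C
  | .inl x => v x
  | .inr r => r

/-- Tuples of precomputed terms matching the variable list `xs`. -/
def AggTuple (C : Type) (xs : List ℕ) : Type := {rs : List (Pre C) // rs.length = xs.length}

/-- `Δ` justifies the aggregate expression `E` (relative to the valuation `v`
and the list `xs` of its variables): `≺` holds between `α̂([Δ])` and `s`,
where `[Δ]` is the union of the value sets of the instantiated tuples `t`. -/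
def Justifies (v : Val C) (xs : List ℕ) (E : AggExpr C O A)
    (Δ : Set (AggTuple C xs)) : Prop :=
  Rel.eval lt E.rel
    (aggFun E.name
      {q | ∃ rs ∈ Δ, Term.vals opFun (updList v xs rs.val) E.ts q})
    (boundVal v E.bound)

/-- `τ` of a closed aggregate expression `E`, relative to the list `xs` of its
variables: the conjunction, over all subsets `Δ` of the set `A` of tuples of
precomputed terms matching `xs` that do not justify `E`, of the implications
`(⋀_{r∈Δ} τ(C^X_r)) → (⋁_{r∈A∖Δ} τ(C^X_r))`. -/
noncomputable def tauAgg (v : Val C) (xs : List ℕ) (E : AggExpr C O A) :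
    IForm (EGAtom C) :=
  .conj {Δ : Set (AggTuple C xs) // ¬ Justifies opFun aggFun lt v xs E Δ}
    (fun Δ => .impl
      (.conj {rs : AggTuple C xs // rs ∈ Δ.val}
        (fun rs => tauCond opFun lt (updList v xs rs.val.val) E.cond))
      (.disj {rs : AggTuple C xs // rs ∉ Δ.val}
        (fun rs => tauCond opFun lt (updList v xs rs.val.val) E.cond)))

/-- `τ` of a closed aggregate expression, with `X` the list of variables
occurring in it. -/
noncomputable def tauAggE (v : Val C) (E : AggExpr C O A) : IForm (EGAtom C) :=
  tauAgg opFun aggFun lt v (E.varList.dedup) E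

/-- `τ` of a body element of (an instance of) a rule whose list of local
variables is `loc`; in the instance, the variables occurring in an aggregate
expression `E` are the variables of `E` that are local in the rule. -/
noncomputable def tauBElem (v : Val C) (loc : List ℕ) : BElem C O A → IForm (EGAtom C)
  | .lit l => tauLit opFun v l
  | .comp c => tauComp opFun lt v c
  | .agg E => tauAgg opFun aggFun lt v (E.varList.dedup.filter (· ∈ loc)) E

/-- `τ` of the body of (an instance of) a rule with local variable list `loc`. -/
noncomputable def tauBody (v : Val C) (loc : List ℕ) (b : List (BElem C O A)) :
    IForm (EGAtom C) :=
  IForm.conjList (b.map (tauBElem opFun aggFun lt v loc))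

/-- `τ` of (an instance, given by the valuation `v`, of) a rule. -/
noncomputable def tauRule (v : Val C) (R : Rule C O A) : IForm (EGAtom C) :=
  match R.head with
  | .basic p ts => .impl (tauBody opFun aggFun lt v R.localList R.body)
      (.conj {rs : List (Pre C) // Term.vals opFun v ts rs}
        (fun rs => .atom (p, rs.val)))
  | .choice p ts => .impl (tauBody opFun aggFun lt v R.localList R.body)
      (.conj {rs : List (Pre C) // Term.vals opFun v ts rs}
        (fun rs => .or (.atom (p, rs.val)) (.neg (.atom (p, rs.val)))))
  | .empty => .neg (tauBody opFun aggFun lt v R.localList R.body)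

/-- `τΓ`: the conjunction of `τR` over all instances `R` of the rules of `Γ`
(instances given by valuations of the global variables). -/
noncomputable def tauProg (Γ : Set (Rule C O A)) : IForm (EGAtom C) :=
  .conj ({R : Rule C O A // R ∈ Γ} × Val C)
    (fun z => tauRule opFun aggFun lt z.2 z.1.val)

/-- Stable models of an EG program: stable models of `τΓ`. -/
noncomputable def EGStable (I : Interp C) (Γ : Set (Rule C O A)) : Prop :=
  IForm.stable I (tauProg opFun aggFun lt Γ)

/-- The infinitary program `τ₁Γ`: the rules `τ(Body) → p(r)` for all instances
of basic rules of `Γ` and all `r ∈ [t]`, together with the rules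
`τ(Body) ∧ ¬¬p(r) → p(r)` for all instances of choice rules and all `r ∈ [t]`. -/
noncomputable def tau1 (Γ : Set (Rule C O A)) : IProg (EGAtom C) :=
  {ir | ∃ R ∈ Γ, ∃ v : Val C,
    (∃ p ts rs, R.head = Head.basic p ts ∧ Term.vals opFun v ts rs ∧
      ir = ⟨tauBody opFun aggFun lt v R.localList R.body, (p, rs)⟩) ∨
    (∃ p ts rs, R.head = Head.choice p ts ∧ Term.vals opFun v ts rs ∧
      ir = ⟨IForm.and (tauBody opFun aggFun lt v R.localList R.body)
              (IForm.neg (IForm.neg (IForm.atom (p, rs)))), (p, rs)⟩)}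

/-- The infinitary formula `τ₂Γ`: the conjunction of `¬τ(C)` over all
instances `← C` of the constraints of `Γ`. -/
noncomputable def tau2 (Γ : Set (Rule C O A)) : IForm (EGAtom C) :=
  .conj ({R : Rule C O A // R ∈ Γ ∧ R.head = Head.empty} × Val C)
    (fun z => .neg (tauBody opFun aggFun lt z.2 z.1.val.localList z.1.val.body))

/-- `τ` of a closed conjunction of ground literals, ground comparisons and
closed aggregate expressions (each aggregate expression translated relative
to the list of its own variables). -/
noncomputable def tauBElemC (v : Val C) : BElem C O A → IForm (EGAtom C)
  | .lit l => tauLit opFun v l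
  | .comp c => tauComp opFun lt v c
  | .agg E => tauAggE opFun aggFun lt v E

noncomputable def tauBodyC (v : Val C) (b : List (BElem C O A)) : IForm (EGAtom C) :=
  IForm.conjList (b.map (tauBElemC opFun aggFun lt v))

end Tau

/-! ### Completion of an EG program -/

section Completion
variable {C O A : Type}
variable (opFun : O → List ℤ → Option ℤ)
variable (aggFun : A → Set (List (Pre C)) → Pre C)
variable (lt : Pre C → Pre C → Prop)

/-- `I` satisfies the completion of the finite program `Γ`: the completed
definitions of all predicate symbols occurring in `Γ` together with the
universal closures of the formula representations of all constraints of `Γ`. -/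
def SatCompletion [DecidableEq C] (Γ : List (Rule C O A)) (I : Interp C) : Prop :=
  (∀ (p : C) (n : ℕ), (∃ R ∈ Γ, Rule.hasPredSym p n R) →
    ∀ v : Val C, AFml.sat opFun aggFun lt I v (completedDef Γ p n)) ∧
  (∀ R ∈ Γ, R.head = Head.empty →
    ∀ v : Val C, AFml.sat opFun aggFun lt I v (phiConstraintRep R))

end Completion

end EG

/-!
If `B` is a parent of `A` relative to `τ₁Γ`, the rule witnessing this comes from a rule `R` of `Γ`
with head predicate that of `A`, and `B` is a positive nonnegated atom of `τ(Body R)`. Such atoms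
arise only from positive literals and from the conditions of aggregate expressions (the antecedents
of the implications in `τ` of an aggregate have no negative nonnegated atoms), so the predicate
symbols of `A` and `B` are joined by an edge of `G_Γ`. An infinite parent chain therefore gives an
infinite walk in `G_Γ` through heads of the finitely many rules of `Γ`; a vertex repeats, and the
walk contains a cycle.
-/

theorem Relation.not_forall_chain_of_acyclic {α : Type*} {r : α → α → Prop} {S : Set α}
    (hS : S.Finite) (hsrc : ∀ a b, r a b → a ∈ S) (hacyc : ∀ a, ¬ Relation.TransGen r a a)
    (g : ℕ → α) : ¬ ∀ i, r (g i) (g (i + 1)) := by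
  intro hg
  obtain ⟨i, j, hij, hgij⟩ := hS.exists_lt_map_eq_of_forall_mem fun i => hsrc _ _ (hg i)
  have hchain : Relation.TransGen (fun m n => r (g m) (g n)) i j :=
    transGen_of_succ_of_lt _ (fun k _ => hg k) hij
  have hcycle : Relation.TransGen r (g i) (g j) := hchain.lift g fun _ _ h => h
  rw [← hgij] at hcycle
  exact hacyc (g i) hcycle

namespace EG

namespace IForm
variable {α : Type}

theorem mem_pnn_conjList {l : List (IForm α)} {a : α} :
    a ∈ Pnn (conjList l) ↔ ∃ F ∈ l, a ∈ Pnn F := by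
  simp only [conjList, Pnn, Set.mem_iUnion, List.get_eq_getElem]
  exact ⟨fun ⟨i, h⟩ => ⟨_, List.getElem_mem _, h⟩, fun ⟨F, hF, h⟩ => by
    obtain ⟨i, hi, rfl⟩ := List.getElem_of_mem hF
    exact ⟨⟨i, hi⟩, h⟩⟩

theorem nnn_conjList_eq_empty {l : List (IForm α)} (hl : ∀ F ∈ l, Nnn F = ∅) :
    Nnn (conjList l) = ∅ := by
  simp only [conjList, Nnn, List.get_eq_getElem]
  exact Set.iUnion_eq_empty.2 fun i => hl _ (List.getElem_mem _)

theorem pnn_and_neg_neg (F G : IForm α) : Pnn (IForm.and F (neg (neg G))) = Pnn F := by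
  ext a
  simp [IForm.and, neg, Pnn]

end IForm

section Tau
variable {C O A : Type} {opFun : O → List ℤ → Option ℤ}
  {aggFun : A → Set (List (Pre C)) → Pre C} {lt : Pre C → Pre C → Prop} {v : Val C}

theorem Term.vals_length {ts : List (Term C O)} {rs : List (Pre C)}
    (h : Term.vals opFun v ts rs) : rs.length = ts.length := by
  induction ts generalizing rs with
  | nil => simp_all [Term.vals]
  | cons t ts ih =>
    obtain ⟨r, rs', rfl, -, hrs'⟩ := h
    simp [ih hrs']

theorem hasPred_of_mem_pnn_tauLit {l : Lit C O} {a : EGAtom C}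
    (h : a ∈ IForm.Pnn (tauLit opFun v l)) :
    l.pos = true ∧ l.hasPred a.1 a.2.length := by
  unfold tauLit at h
  cases hpos : l.pos
  · simp [hpos, IForm.Pnn, IForm.neg] at h
  · simp only [hpos, if_true, IForm.Pnn, Set.mem_iUnion, Set.mem_singleton_iff] at h
    obtain ⟨⟨rs, hrs⟩, rfl⟩ := h
    exact ⟨rfl, rfl, (Term.vals_length hrs).symm⟩

theorem nnn_tauLit_eq_empty (l : Lit C O) : IForm.Nnn (tauLit opFun v l) = ∅ := by
  unfold tauLit
  split <;> simp [IForm.Nnn, IForm.neg]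

theorem pnn_tauComp_eq_empty (c : Comp C O) : IForm.Pnn (tauComp opFun lt v c) = ∅ := by
  unfold tauComp
  split <;> simp [IForm.Pnn, IForm.top]

theorem nnn_tauComp_eq_empty (c : Comp C O) : IForm.Nnn (tauComp opFun lt v c) = ∅ := by
  unfold tauComp
  split <;> simp [IForm.Nnn, IForm.top]

theorem hasPred_of_mem_pnn_tauCondElem {ce : CondElem C O} {a : EGAtom C}
    (h : a ∈ IForm.Pnn (tauCondElem opFun lt v ce)) : ce.hasPred a.1 a.2.length := by
  cases ce with
  | inl l => exact (hasPred_of_mem_pnn_tauLit h).2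
  | inr c => simp [tauCondElem, pnn_tauComp_eq_empty] at h

theorem nnn_tauCondElem_eq_empty (ce : CondElem C O) :
    IForm.Nnn (tauCondElem opFun lt v ce) = ∅ := by
  cases ce with
  | inl l => exact nnn_tauLit_eq_empty l
  | inr c => exact nnn_tauComp_eq_empty c

theorem exists_hasPred_of_mem_pnn_tauCond {cond : List (CondElem C O)} {a : EGAtom C}
    (h : a ∈ IForm.Pnn (tauCond opFun lt v cond)) : ∃ ce ∈ cond, ce.hasPred a.1 a.2.length := by
  obtain ⟨F, hF, ha⟩ := IForm.mem_pnn_conjList.1 h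
  obtain ⟨ce, hce, rfl⟩ := List.mem_map.1 hF
  exact ⟨ce, hce, hasPred_of_mem_pnn_tauCondElem ha⟩

theorem nnn_tauCond_eq_empty (cond : List (CondElem C O)) :
    IForm.Nnn (tauCond opFun lt v cond) = ∅ :=
  IForm.nnn_conjList_eq_empty fun _ hF => by
    obtain ⟨ce, -, rfl⟩ := List.mem_map.1 hF
    exact nnn_tauCondElem_eq_empty ce

theorem hasPred_of_mem_pnn_tauAgg {xs : List ℕ} {E : AggExpr C O A} {a : EGAtom C}
    (h : a ∈ IForm.Pnn (tauAgg opFun aggFun lt v xs E)) : E.hasPred a.1 a.2.length := by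
  simp only [tauAgg, IForm.Pnn, IForm.Nnn, nnn_tauCond_eq_empty, Set.iUnion_empty, Set.empty_union,
    Set.mem_iUnion] at h
  obtain ⟨_, _, ha⟩ := h
  exact exists_hasPred_of_mem_pnn_tauCond ha

theorem exists_hasPosOrAggPred_of_mem_pnn_tauBody {loc : List ℕ} {b : List (BElem C O A)}
    {a : EGAtom C}
    (h : a ∈ IForm.Pnn (tauBody opFun aggFun lt v loc b)) :
    ∃ e ∈ b, e.hasPosOrAggPred a.1 a.2.length := by
  obtain ⟨F, hF, ha⟩ := IForm.mem_pnn_conjList.1 h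
  obtain ⟨e, he, rfl⟩ := List.mem_map.1 hF
  refine ⟨e, he, ?_⟩
  cases e with
  | lit l => exact hasPred_of_mem_pnn_tauLit ha
  | comp c => simp [tauBElem, pnn_tauComp_eq_empty] at ha
  | agg E => exact hasPred_of_mem_pnn_tauAgg ha

theorem depEdge_of_parent {Γ : Set (Rule C O A)} {I : Interp C} {a b : EGAtom C}
    (h : IProg.parent (tau1 opFun aggFun lt Γ) I b a) :
    DepEdge Γ (a.1, a.2.length) (b.1, b.2.length) := by
  obtain ⟨-, -, r, ⟨R, hR, v, hr⟩, rfl, -, hb⟩ := h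
  rcases hr with ⟨p, ts, rs, hhead, hrs, rfl⟩ | ⟨p, ts, rs, hhead, hrs, rfl⟩ <;>
    simp only [IForm.pnn_and_neg_neg] at hb <;>
    exact ⟨R, hR, by simp [hhead, Head.hasPred, Term.vals_length hrs],
      exists_hasPosOrAggPred_of_mem_pnn_tauBody hb⟩

end Tau

theorem Head.hasPred_subsingleton {C O : Type} (h : Head C O) :
    {s : C × ℕ | h.hasPred s.1 s.2}.Subsingleton := by
  rintro ⟨p, n⟩ hs ⟨p', n'⟩ hs'
  cases h <;> simp_all [Head.hasPred]

theorem finite_depEdge_sources {C O A : Type} (Γ : List (Rule C O A)) :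
    {s : C × ℕ | ∃ t, DepEdge {R | R ∈ Γ} s t}.Finite := by
  refine ((List.finite_toSet Γ).biUnion fun R _ => R.head.hasPred_subsingleton.finite).subset ?_
  rintro s ⟨t, R, hR, hs, -⟩
  exact Set.mem_biUnion hR hs

/-- Lemma 10: if a (finite) EG program `Γ` is tight, i.e. its
predicate dependency graph is acyclic, then the infinitary program `τ₁Γ` is
tight on every interpretation. -/
theorem tight_EG_tau1_tight {C O A : Type}
    (opFun : O → List ℤ → Option ℤ)
    (aggFun : A → Set (List (Pre C)) → Pre C)
    (lt : Pre C → Pre C → Prop) (hlt : PreOrderOK lt)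
    (Γ : List (Rule C O A)) (htight : EGTight {R | R ∈ Γ}) :
    ∀ I : Interp C, IProg.tightOn (tau1 opFun aggFun lt {R | R ∈ Γ}) I := by
  rintro I ⟨f, -, hparent⟩
  exact Relation.not_forall_chain_of_acyclic (finite_depEdge_sources Γ)
    (fun s t hst => ⟨t, hst⟩) htight (fun i => ((f i).1, (f i).2.length))
    fun i => depEdge_of_parent (hparent i)

end EG
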